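/- The matrix Ξ(z) with entries built from modified Bessel functions, Ξ_{11}(z) = sqrt(2/π)·π I_{-ν}(2√z), Ξ_{12}(z) = -sqrt(2/π)·K_{-ν}(2√z), Ξ_{21}(z) = sqrt(2/π)·π √z I_{1-ν}(2√z), Ξ_{22}(z) = sqrt(2/π)·√z K_{1-ν}(2√z), satisfies the linear ODE Ξ'(z) = A(z) Ξ(z) with A(z) = [[-ν/(2z), 1/z],[1, ν/(2z)]], for z in the cut plane with principal square root. -/

import Mathlib

/-!
Write `I_α(2√w) = (√w)^α S_α(w)` with `S_α(w) = Σ w^k / (k! Γ(k+α+1))`, an entire function.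
Termwise differentiation gives `S_α' = S_{α+1}`, and `1/Γ(s) = s/Γ(s+1)` gives
`S_{α-1} = α S_α + w S_{α+1}`; these are the recurrences `I_α' = I_{α±1} ± (α/x) I_α` read in the
variable `w = x²/4`. Hence both `(I_{-ν}, √w I_{1-ν})` and `(I_ν, √w I_{ν-1})`, evaluated at `2√w`,
solve `v' = A v`. The first column of `Ξ` is a multiple of the first solution and, since
`sin(π(1-ν)) = -sin(-πν)`, the second column is a multiple of their difference.
-/

open Complex Matrix

/-- Modified Bessel function of the first kind `I_α(x) = Σ_{k≥0} (x/2)^{2k+α}/(k! Γ(k+α+1))`. -/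
noncomputable def besselI (α x : ℂ) : ℂ :=
  ∑' k : ℕ, (x / 2) ^ (2 * k) * (x / 2) ^ α / ((k.factorial : ℂ) * Complex.Gamma ((k : ℂ) + α + 1))

/-- Modified Bessel function of the second kind `K_α(x) = (π/(2 sin πα))(I_{-α}(x) - I_α(x))`. -/
noncomputable def besselK (α x : ℂ) : ℂ :=
  (Real.pi : ℂ) / (2 * Complex.sin ((Real.pi : ℂ) * α)) * (besselI (-α) x - besselI α x)

/-- The matrix `Ξ(z)` built from modified Bessel functions (principal square root `√z`). -/
noncomputable def XiMat (ν z : ℂ) : Matrix (Fin 2) (Fin 2) ℂ :=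
  ((2 / (Real.pi : ℂ)) ^ ((1 : ℂ) / 2)) •
    !![(Real.pi : ℂ) * besselI (-ν) (2 * z ^ ((1 : ℂ) / 2)),
        -besselK (-ν) (2 * z ^ ((1 : ℂ) / 2));
      (Real.pi : ℂ) * z ^ ((1 : ℂ) / 2) * besselI (1 - ν) (2 * z ^ ((1 : ℂ) / 2)),
        z ^ ((1 : ℂ) / 2) * besselK (1 - ν) (2 * z ^ ((1 : ℂ) / 2))]

/-- The coefficient matrix `A(z) = [[-ν/(2z), 1/z], [1, ν/(2z)]]` of the bare ODE. -/
noncomputable def bareA (ν z : ℂ) : Matrix (Fin 2) (Fin 2) ℂ :=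
  !![-ν / (2 * z), 1 / z; 1, ν / (2 * z)]

noncomputable def besselCoeff (α : ℂ) (k : ℕ) : ℂ := ((k.factorial : ℂ) * Gamma (k + α + 1))⁻¹

/-- The regularized hypergeometric function `₀F₁(; α + 1; w)`. -/
noncomputable def besselSeries (α w : ℂ) : ℂ := ∑' k : ℕ, w ^ k * besselCoeff α k

section besselSeries

variable (α : ℂ)

lemma succ_mul_besselCoeff_succ (k : ℕ) :
    ((k : ℂ) + 1) * besselCoeff α (k + 1) = besselCoeff (α + 1) k := by
  have hk : ((k + 1 : ℕ) : ℂ) + α + 1 = k + (α + 1) + 1 := by push_cast; ring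
  rw [besselCoeff, besselCoeff, hk, Nat.factorial_succ, Nat.cast_mul, mul_assoc, mul_inv,
    ← mul_assoc, Nat.cast_succ, mul_inv_cancel₀ (Nat.cast_add_one_ne_zero k), one_mul]

lemma add_mul_besselCoeff (k : ℕ) : (α + k) * besselCoeff α k = besselCoeff (α - 1) k := by
  rw [besselCoeff, besselCoeff, mul_inv, mul_inv, mul_left_comm,
    one_div_Gamma_eq_self_mul_one_div_Gamma_add_one ((k : ℂ) + (α - 1) + 1)]
  ring_nf

lemma summable_norm_besselCoeff (z : ℂ) : Summable fun k : ℕ => ‖z ^ k * besselCoeff α k‖ := by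
  have hr : (regularizedHGFunSeries 0 {α + 1}).radius = ⊤ :=
    radius_regularizedHGFunSeries_eq_top (by simp)
  convert (regularizedHGFunSeries 0 {α + 1}).summable_norm_apply (x := z) (by simp [hr])
    using 2 with k
  simp [regularizedHGFunCoeff, besselCoeff, add_assoc, add_comm (k : ℂ)]

lemma hasSum_besselSeries (z : ℂ) :
    HasSum (fun k : ℕ => z ^ k * besselCoeff α k) (besselSeries α z) :=
  (summable_norm_besselCoeff α z).of_norm.hasSum

lemma succ_mul_pow_mul_besselCoeff_succ (z : ℂ) (k : ℕ) :
    ((k + 1 : ℕ) : ℂ) * z ^ (k + 1 - 1) * besselCoeff α (k + 1) =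
      z ^ k * besselCoeff (α + 1) k := by
  rw [← succ_mul_besselCoeff_succ, Nat.add_sub_cancel, Nat.cast_succ]
  ring

lemma hasSum_besselSeries_deriv (z : ℂ) :
    HasSum (fun k : ℕ => k * z ^ (k - 1) * besselCoeff α k) (besselSeries (α + 1) z) := by
  rw [← hasSum_nat_add_iff' 1]
  simp only [succ_mul_pow_mul_besselCoeff_succ, Finset.sum_range_one, Nat.cast_zero, zero_mul,
    sub_zero]
  exact hasSum_besselSeries (α + 1) z

lemma hasDerivAt_besselSeries (z : ℂ) :
    HasDerivAt (besselSeries α) (besselSeries (α + 1) z) z := by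
  set R : ℝ := ‖z‖ + 1
  have hu : Summable fun k : ℕ => ‖(k : ℂ) * (R : ℂ) ^ (k - 1) * besselCoeff α k‖ := by
    rw [← summable_nat_add_iff 1]
    simp only [succ_mul_pow_mul_besselCoeff_succ]
    exact summable_norm_besselCoeff (α + 1) R
  have hbound (k : ℕ) (y : ℂ) (hy : y ∈ Metric.ball 0 R) :
      ‖(k : ℂ) * y ^ (k - 1) * besselCoeff α k‖ ≤
        ‖(k : ℂ) * (R : ℂ) ^ (k - 1) * besselCoeff α k‖ := by
    rw [mem_ball_zero_iff] at hy
    simp only [norm_mul, norm_pow, Complex.norm_real, Real.norm_eq_abs]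
    gcongr
    exact hy.le.trans (le_abs_self R)
  have := hasDerivAt_tsum_of_isPreconnected hu Metric.isOpen_ball
    (convex_ball (0 : ℂ) R).isPreconnected (fun k y _ => (hasDerivAt_pow k y).mul_const _) hbound
    (Metric.mem_ball_self (by positivity)) (hasSum_besselSeries α 0).summable
    (mem_ball_zero_iff.mpr (lt_add_one _))
  rwa [(hasSum_besselSeries_deriv α z).tsum_eq] at this

lemma besselSeries_sub_one (z : ℂ) :
    besselSeries (α - 1) z = α * besselSeries α z + z * besselSeries (α + 1) z := by
  have hz : HasSum (fun k : ℕ => (k : ℂ) * (z ^ k * besselCoeff α k))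
      (z * besselSeries (α + 1) z) := by
    refine ((hasSum_besselSeries_deriv α z).mul_left z).congr_fun fun k => ?_
    rcases k with _ | k
    · simp
    · rw [Nat.add_sub_cancel, pow_succ]; ring
  refine (hasSum_besselSeries (α - 1) z).unique
    ((((hasSum_besselSeries α z).mul_left α).add hz).congr_fun fun k => ?_)
  rw [← add_mul_besselCoeff]
  ring

end besselSeries

lemma cpow_one_half_cpow (w a : ℂ) : (w ^ (1 / 2 : ℂ)) ^ a = w ^ (a / 2) := by
  have him : (log w * (1 / 2)).im = w.arg / 2 := by simp [log_im]; ring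
  rw [← cpow_mul]
  · ring_nf
  · rw [him]; linarith [neg_pi_lt_arg w, Real.pi_pos]
  · rw [him]; linarith [arg_le_pi w, Real.pi_pos]

lemma cpow_one_half_sq (w : ℂ) : (w ^ (1 / 2 : ℂ)) ^ 2 = w := by
  rw [one_div]; exact_mod_cast cpow_nat_inv_pow w two_ne_zero

lemma cpow_one_half_ne_zero {w : ℂ} (hw : w ≠ 0) : w ^ (1 / 2 : ℂ) ≠ 0 := by
  intro h
  rw [← cpow_one_half_sq w, h, zero_pow two_ne_zero] at hw
  exact hw rfl

lemma besselI_two_mul_sqrt (α w : ℂ) :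
    besselI α (2 * w ^ (1 / 2 : ℂ)) = (w ^ (1 / 2 : ℂ)) ^ α * besselSeries α w := by
  rw [besselI, besselSeries, ← tsum_mul_left]
  refine tsum_congr fun k => ?_
  rw [mul_div_cancel_left₀ _ two_ne_zero, pow_mul, cpow_one_half_sq, besselCoeff]
  ring

lemma hasDerivAt_besselI_two_mul_sqrt_besselSeries (α : ℂ) {z : ℂ} (hz : z ∈ slitPlane) :
    HasDerivAt (fun w => besselI α (2 * w ^ (1 / 2 : ℂ)))
      ((z ^ (1 / 2 : ℂ)) ^ α * (α / (2 * z) * besselSeries α z + besselSeries (α + 1) z)) z := by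
  have hI : (fun w => besselI α (2 * w ^ (1 / 2 : ℂ))) = fun w => w ^ (α / 2) * besselSeries α w :=
    funext fun w => by rw [besselI_two_mul_sqrt, cpow_one_half_cpow]
  rw [hI, cpow_one_half_cpow]
  refine ((hasStrictDerivAt_cpow_const hz).hasDerivAt.mul
    (hasDerivAt_besselSeries α z)).congr_deriv ?_
  rw [cpow_sub _ _ (slitPlane_ne_zero hz), cpow_one]
  field_simp

lemma hasDerivAt_besselI_two_mul_sqrt (α : ℂ) {z : ℂ} (hz : z ∈ slitPlane) :
    HasDerivAt (fun w => besselI α (2 * w ^ (1 / 2 : ℂ)))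
      (α / (2 * z) * besselI α (2 * z ^ (1 / 2 : ℂ))
        + besselI (α + 1) (2 * z ^ (1 / 2 : ℂ)) / z ^ (1 / 2 : ℂ)) z := by
  have hs := cpow_one_half_ne_zero (slitPlane_ne_zero hz)
  convert hasDerivAt_besselI_two_mul_sqrt_besselSeries α hz using 1
  rw [besselI_two_mul_sqrt, besselI_two_mul_sqrt, cpow_add _ _ hs, cpow_one]
  field_simp

lemma hasDerivAt_besselI_two_mul_sqrt' (α : ℂ) {z : ℂ} (hz : z ∈ slitPlane) :
    HasDerivAt (fun w => besselI α (2 * w ^ (1 / 2 : ℂ)))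
      (-α / (2 * z) * besselI α (2 * z ^ (1 / 2 : ℂ))
        + besselI (α - 1) (2 * z ^ (1 / 2 : ℂ)) / z ^ (1 / 2 : ℂ)) z := by
  have hs := cpow_one_half_ne_zero (slitPlane_ne_zero hz)
  convert hasDerivAt_besselI_two_mul_sqrt_besselSeries α hz using 1
  rw [besselI_two_mul_sqrt, besselI_two_mul_sqrt, besselSeries_sub_one, sub_eq_add_neg,
    cpow_add _ _ hs, cpow_neg_one]
  have hsq := cpow_one_half_sq z
  generalize z ^ (1 / 2 : ℂ) = s at hs hsq ⊢
  subst hsq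
  field_simp
  ring

lemma hasDerivAt_apply_of_hasDerivAt_transpose {𝕜 m n : Type*} [NontriviallyNormedField 𝕜]
    [Fintype m] {X : 𝕜 → Matrix m n 𝕜} {A : Matrix m m 𝕜} {z : 𝕜} {j : n}
    (h : HasDerivAt (fun w => (X w)ᵀ j) (A *ᵥ (X z)ᵀ j) z) (i : m) :
    HasDerivAt (fun w => X w i j) ((A * X z) i j) z :=
  hasDerivAt_pi.1 h i

lemma hasDerivAt_bareA_mulVec_of_recurrence {ν z : ℂ} {f g : ℂ → ℂ} (hz : z ∈ slitPlane)
    (hf : HasDerivAt f (-ν / (2 * z) * f z + g z / z ^ (1 / 2 : ℂ)) z)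
    (hg : HasDerivAt g ((ν - 1) / (2 * z) * g z + f z / z ^ (1 / 2 : ℂ)) z) :
    HasDerivAt (fun w => ![f w, w ^ (1 / 2 : ℂ) * g w])
      (bareA ν z *ᵥ ![f z, z ^ (1 / 2 : ℂ) * g z]) z := by
  have hs := cpow_one_half_ne_zero (slitPlane_ne_zero hz)
  have hsq := cpow_one_half_sq z
  refine hasDerivAt_pi.2 fun i => ?_
  fin_cases i
  · refine hf.congr_deriv ?_
    simp only [bareA, mulVec, dotProduct, Fin.sum_univ_two, of_apply, cons_val', cons_val_zero,
      cons_val_one, empty_val', cons_val_fin_one, Fin.zero_eta]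
    generalize z ^ (1 / 2 : ℂ) = s at hs hsq ⊢
    subst hsq
    field_simp
  · refine ((hasStrictDerivAt_cpow_const hz).hasDerivAt.mul hg).congr_deriv ?_
    simp only [bareA, mulVec, dotProduct, Fin.sum_univ_two, of_apply, cons_val', cons_val_zero,
      cons_val_one, empty_val', cons_val_fin_one, Fin.mk_one]
    rw [cpow_sub _ _ (slitPlane_ne_zero hz), cpow_one]
    generalize z ^ (1 / 2 : ℂ) = s at hs hsq ⊢
    subst hsq
    field_simp
    ring

noncomputable def besselPair (α β w : ℂ) : Fin 2 → ℂ :=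
  ![besselI α (2 * w ^ (1 / 2 : ℂ)), w ^ (1 / 2 : ℂ) * besselI β (2 * w ^ (1 / 2 : ℂ))]

lemma hasDerivAt_besselPair_neg (ν : ℂ) {z : ℂ} (hz : z ∈ slitPlane) :
    HasDerivAt (besselPair (-ν) (1 - ν)) (bareA ν z *ᵥ besselPair (-ν) (1 - ν) z) z := by
  have hf := hasDerivAt_besselI_two_mul_sqrt (-ν) hz
  have hg := hasDerivAt_besselI_two_mul_sqrt' (1 - ν) hz
  rw [neg_add_eq_sub] at hf
  rw [neg_sub, sub_sub_cancel_left] at hg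
  exact hasDerivAt_bareA_mulVec_of_recurrence hz hf hg

lemma hasDerivAt_besselPair (ν : ℂ) {z : ℂ} (hz : z ∈ slitPlane) :
    HasDerivAt (besselPair ν (ν - 1)) (bareA ν z *ᵥ besselPair ν (ν - 1) z) z := by
  have hg := hasDerivAt_besselI_two_mul_sqrt (ν - 1) hz
  rw [sub_add_cancel] at hg
  exact hasDerivAt_bareA_mulVec_of_recurrence hz (hasDerivAt_besselI_two_mul_sqrt' ν hz) hg

lemma XiMat_transpose_zero (ν w : ℂ) :
    (XiMat ν w)ᵀ 0 =
      ((2 / (Real.pi : ℂ)) ^ (1 / 2 : ℂ) * Real.pi) • besselPair (-ν) (1 - ν) w := by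
  ext i
  fin_cases i <;> simp [XiMat, besselPair] <;> ring

lemma XiMat_transpose_one (ν w : ℂ) :
    (XiMat ν w)ᵀ 1 =
      ((2 / (Real.pi : ℂ)) ^ (1 / 2 : ℂ) * (Real.pi / (2 * sin (Real.pi * -ν)))) •
        (besselPair (-ν) (1 - ν) w - besselPair ν (ν - 1) w) := by
  have hsin : sin (Real.pi * (1 - ν)) = -sin (Real.pi * -ν) := by
    rw [mul_one_sub, sin_pi_sub, mul_neg, sin_neg, neg_neg]
  ext i
  fin_cases i <;> simp [XiMat, besselPair, besselK, hsin] <;> ring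

/-- The matrix `Ξ(z)` satisfies the linear ODE `Ξ'(z) = A(z) Ξ(z)` on the cut plane. -/
theorem XiMat_ODE (ν z : ℂ) (hz : z ∈ Complex.slitPlane) (i j : Fin 2) :
    HasDerivAt (fun w => XiMat ν w i j) ((bareA ν z * XiMat ν z) i j) z := by
  have h₁ := hasDerivAt_besselPair_neg ν hz
  have h₂ := hasDerivAt_besselPair ν hz
  refine hasDerivAt_apply_of_hasDerivAt_transpose ?_ i
  match j with
  | 0 =>
    simp only [XiMat_transpose_zero, mulVec_smul]
    exact h₁.const_smul (R := ℂ) _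
  | 1 =>
    simp only [XiMat_transpose_one, mulVec_smul, mulVec_sub]
    exact (h₁.sub h₂).const_smul (R := ℂ) _
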